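/- Let A be a finite set, Ω a finite set, K : Δ(A) × Ω → ℝ affine in its first argument, and A_m : Δ(Ω) ⇉ A an upper hemicontinuous correspondence with nonempty values. Define a Berk-Nash equilibrium as σ ∈ Δ(A) such that there exists π ∈ Δ(argmin_ω K(σ,ω)) with supp(σ) ⊆ A_m(π). Then the set of Berk-Nash equilibria is a compact subset of Δ(A). -/

import Mathlib

/-!
A Berk-Nash equilibrium is the first coordinate of a pair `(σ, π) ∈ Δ(A) × Δ(Θ)` satisfying
two conditions of the form "positive weight implies a closed condition": `π θ > 0` forces `θ`
to minimise the continuous function `K σ`, and `σ a > 0` forces `π` into the closed set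
`{π | a ∈ Am π}`. Such pairs form a closed subset of the compact set `Δ(A) × Δ(Θ)`, and the
equilibria are its image under the continuous projection to `Δ(A)`.
-/

lemma isCompact_setOf_exists_of_isClosed {X Y : Type*} [TopologicalSpace X]
    [TopologicalSpace Y] {s : Set X} {t : Set Y} (hs : IsCompact s) (ht : IsCompact t)
    {R : X → Y → Prop} (hR : IsClosed {p : X × Y | R p.1 p.2}) :
    IsCompact {x | x ∈ s ∧ ∃ y, y ∈ t ∧ R x y} := by
  have h : {x | x ∈ s ∧ ∃ y, y ∈ t ∧ R x y} =
      Prod.fst '' (s ×ˢ t ∩ {p : X × Y | R p.1 p.2}) := by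
    ext x
    simp only [Set.mem_ofPred_eq, Set.mem_image, Set.mem_inter_iff, Set.mem_prod, Prod.exists,
      exists_and_right, exists_eq_right]
    tauto
  rw [h]
  exact ((hs.prod ht).inter_right hR).image continuous_fst

lemma isClosed_setOf_forall_pos_imp {X ι : Type*} [TopologicalSpace X] {f : X → ι → ℝ}
    (hf : ∀ i, Continuous fun x => f x i) {q : ι → X → Prop}
    (hq : ∀ i, IsClosed {x | q i x}) :
    IsClosed {x | ∀ i, 0 < f x i → q i x} := by
  simp only [Set.ofPred_forall]
  exact isClosed_iInter fun i => isClosed_imp (isOpen_lt continuous_const (hf i)) (hq i)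

lemma isClosed_setOf_support_subset_argmin {X Y Θ : Type*} [TopologicalSpace X]
    [TopologicalSpace Y] {π : Y → Θ → ℝ} (hπ : ∀ θ, Continuous fun y => π y θ)
    {K : X → Θ → ℝ} (hK : ∀ θ, Continuous fun x => K x θ) :
    IsClosed {p : X × Y | ∀ θ, 0 < π p.2 θ → ∀ θ', K p.1 θ ≤ K p.1 θ'} := by
  refine isClosed_setOf_forall_pos_imp (fun θ => (hπ θ).comp continuous_snd) fun θ => ?_
  simp only [Set.ofPred_forall]
  exact isClosed_iInter fun θ' =>
    isClosed_le ((hK θ).comp continuous_fst) ((hK θ').comp continuous_fst)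

theorem berkNash_equilibria_isCompact_general
    {A : Type*} [Fintype A] {Θ : Type*} [Fintype Θ]
    (D : A → Θ → ℝ)
    (K : (A → ℝ) → Θ → ℝ)
    (hK_affine : ∀ σ θ, K σ θ = ∑ a, σ a * D a θ)
    (Am : (Θ → ℝ) → Set A)
    (hAm_uhc : ∀ a : A, IsClosed {π : Θ → ℝ | a ∈ Am π}) :
    IsCompact {σ : A → ℝ |
      ((∀ a, 0 ≤ σ a) ∧ ∑ a, σ a = 1) ∧
      ∃ π : Θ → ℝ, ((∀ θ, 0 ≤ π θ) ∧ ∑ θ, π θ = 1) ∧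
        (∀ θ, 0 < π θ → ∀ θ' : Θ, K σ θ ≤ K σ θ') ∧
        (∀ a, 0 < σ a → a ∈ Am π)} := by
  have hK : ∀ θ, Continuous fun σ => K σ θ := fun θ => by
    simp only [hK_affine]
    fun_prop
  have hargmin := isClosed_setOf_support_subset_argmin continuous_apply hK
  have hsupp : IsClosed {p : (A → ℝ) × (Θ → ℝ) | ∀ a, 0 < p.1 a → a ∈ Am p.2} :=
    isClosed_setOf_forall_pos_imp (fun a => (continuous_apply a).comp continuous_fst)
      fun a => (hAm_uhc a).preimage continuous_snd
  exact isCompact_setOf_exists_of_isClosed (isCompact_stdSimplex ℝ A)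
    (isCompact_stdSimplex ℝ Θ) (hargmin.inter hsupp)

/-- **Compactness of the set of Berk-Nash equilibria.**
Let `A` be a finite action set, `Θ` a finite parameter set, `K : Δ(A) × Θ → ℝ` affine
in its first argument (represented by the linear form `K σ θ = ∑ a, σ a * D a θ`), and
`Am : Δ(Θ) ⇉ A` an upper hemicontinuous correspondence (for finite `A`, equivalently:
`{π | a ∈ Am π}` is closed for each `a`) with nonempty values.  A Berk-Nash
equilibrium is a `σ ∈ Δ(A)` such that there exists `π ∈ Δ(Θ)` supported on
`argmin_θ K(σ,θ)` with `supp σ ⊆ Am π`.  The set of Berk-Nash equilibria is a compact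
subset of `Δ(A)`. -/
theorem berkNash_equilibria_isCompact
    {A : Type*} [Fintype A] {Θ : Type*} [Fintype Θ]
    (D : A → Θ → ℝ)
    (K : (A → ℝ) → Θ → ℝ)
    (hK_affine : ∀ σ θ, K σ θ = ∑ a, σ a * D a θ)
    (Am : (Θ → ℝ) → Set A)
    (hAm_nonempty : ∀ π, (Am π).Nonempty)
    (hAm_uhc : ∀ a : A, IsClosed {π : Θ → ℝ | a ∈ Am π}) :
    IsCompact {σ : A → ℝ |
      ((∀ a, 0 ≤ σ a) ∧ ∑ a, σ a = 1) ∧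
      ∃ π : Θ → ℝ, ((∀ θ, 0 ≤ π θ) ∧ ∑ θ, π θ = 1) ∧
        (∀ θ, 0 < π θ → ∀ θ' : Θ, K σ θ ≤ K σ θ') ∧
        (∀ a, 0 < σ a → a ∈ Am π)} :=
  berkNash_equilibria_isCompact_general D K hK_affine Am hAm_uhc
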